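/- Let A, B be real n×n matrices with B − A invertible, and let τ_J for each nonempty J ⊆ {1,…,n} with B_J − A_J invertible denote μ_J/(1+μ_J) with μ_J = ρ((B_J − A_J)⁻¹A_J). Assume (c1) A is entrywise nonnegative, (c2) B_{ij} ≤ A_{ij} for i ≠ j, and (c3) there is an entrywise positive u with (B−A)u entrywise positive. Then for every nonempty J ⊆ {1,…,n}: the matrix tB_J − A_J is an M-matrix for all t with τ_J ≤ t ≤ 1, and tB_J − A_J is not an M-matrix for all t with 0 < t < τ_J. -/

import Mathlib

/-!
Write `C = B_J - A_J` and `M = C⁻¹ A_J ≥ 0`, so that `μ_J = ρ(M)` and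
`t B_J - A_J = t C - (1 - t) A_J`; the condition `τ_J ≤ t` reads `(1 - t) μ_J ≤ t`.
Since `C` is a Z-matrix with `C u > 0` it is a nonsingular M-matrix, so `C⁻¹ ≥ 0`.
The workhorse is that `(q - P)⁻¹ ≥ 0` whenever `P ≥ 0` and `ρ(P) < q`, by a Neumann series
whose convergence comes from Gelfand's formula; it yields both Collatz–Wielandt bounds for `ρ`.

If `(1 - t) μ ≤ t`, an eigenvalue `ν ≠ 0` of `X = t C - (1 - t) A_J` with `Re ν ≤ 0` and an
eigenvector `v` would give, for `w = |v|`, an inequality `(t + δ) w ≤ (1 - t) M w` with `δ > 0`,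
so `t + δ ≤ (1 - t) μ ≤ t`. So the spectrum of the Z-matrix `X` lies in `{0} ∪ {Re > 0}`, which makes it an
M-matrix. If `t < (1 - t) μ`, take `w ≥ 0` with `μ w ≤ M w`; for small `ε > 0` the vector
`y = (t C + ε)⁻¹ (1 - t) A_J w` satisfies `y ≥ w` and `(X + ε) y ≤ 0`, which is impossible when
`X + ε` is a nonsingular M-matrix, as it would be if `X` were an M-matrix.
-/

open Matrix

/-- Spectral radius of a real matrix: supremum of the absolute values of its
complex eigenvalues. -/
noncomputable def specRad {m : Type*} [Fintype m] [DecidableEq m] (M : Matrix m m ℝ) : ℝ :=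
  sSup ((fun z : ℂ => ‖z‖) '' spectrum ℂ (M.map (algebraMap ℝ ℂ)))

/-- Principal submatrix of `A` with rows and columns indexed by `J`. -/
def subm {n : ℕ} (A : Matrix (Fin n) (Fin n) ℝ) (J : Finset (Fin n)) :
    Matrix {i // i ∈ J} {i // i ∈ J} ℝ :=
  A.submatrix Subtype.val Subtype.val

/-- `X` is an M-matrix: `X = q•I − P` with `P ≥ 0` and `q ≥ ρ(P)`. -/
def IsMMatrix {m : Type*} [Fintype m] [DecidableEq m] (X : Matrix m m ℝ) : Prop :=
  ∃ q : ℝ, ∃ P : Matrix m m ℝ, (∀ i j, 0 ≤ P i j) ∧ X = q • 1 - P ∧ specRad P ≤ q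

/-- `X` is a nonsingular M-matrix: `X = q•I − P` with `P ≥ 0` and `q > ρ(P)`. -/
def IsNonsingMMatrix {m : Type*} [Fintype m] [DecidableEq m] (X : Matrix m m ℝ) : Prop :=
  ∃ q : ℝ, ∃ P : Matrix m m ℝ, (∀ i j, 0 ≤ P i j) ∧ X = q • 1 - P ∧ specRad P < q

/-- `τ_J = μ_J/(1+μ_J)` with `μ_J = ρ((B_J − A_J)⁻¹A_J)`. -/
noncomputable def tauJ {n : ℕ} (A B : Matrix (Fin n) (Fin n) ℝ)
    (J : Finset (Fin n)) : ℝ :=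
  specRad ((subm B J - subm A J)⁻¹ * subm A J) /
    (1 + specRad ((subm B J - subm A J)⁻¹ * subm A J))

open Filter Topology

def IsZMatrix {m : Type*} (X : Matrix m m ℝ) : Prop := ∀ i j, i ≠ j → X i j ≤ 0

lemma IsZMatrix.nonneg_smul_one_sub {m : Type*} [DecidableEq m] {X : Matrix m m ℝ}
    (hX : IsZMatrix X) {q : ℝ} (hq : ∀ i, X i i ≤ q) : ∀ i j, 0 ≤ (q • 1 - X) i j := by
  intro i j
  rcases eq_or_ne i j with rfl | hij
  · simpa using hq i
  · simpa [one_apply_ne hij] using hX i j hij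

lemma IsZMatrix.smul_sub_smul {m : Type*} {A C : Matrix m m ℝ} (hC : IsZMatrix C)
    (hA : ∀ i j, 0 ≤ A i j) {t : ℝ} (ht0 : 0 ≤ t) (ht1 : t ≤ 1) :
    IsZMatrix (t • C - (1 - t) • A) := fun i j hij => by
  simp only [Matrix.sub_apply, Matrix.smul_apply, smul_eq_mul]
  nlinarith [hC i j hij, hA i j]

section

variable {m : Type*} [Fintype m]

lemma exists_le_mul_of_pos (f g : m → ℝ) : ∃ c, 0 ≤ c ∧ ∀ i, 0 < g i → f i ≤ c * g i :=
  ⟨∑ i, |f i / g i|, Finset.sum_nonneg fun _ _ => abs_nonneg _, fun i hi => (div_le_iff₀ hi).1 <|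
    (le_abs_self _).trans (Finset.single_le_sum (fun j _ => abs_nonneg (f j / g j))
      (Finset.mem_univ i))⟩

lemma mulVec_mono_of_nonneg {M : Matrix m m ℝ} (hM : ∀ i j, 0 ≤ M i j) {x y : m → ℝ}
    (h : x ≤ y) : M *ᵥ x ≤ M *ᵥ y :=
  fun i => Finset.sum_le_sum fun j _ => mul_le_mul_of_nonneg_left (h j) (hM i j)

lemma mulVec_nonneg_of_nonneg {M : Matrix m m ℝ} (hM : ∀ i j, 0 ≤ M i j) {x : m → ℝ}
    (hx : 0 ≤ x) : 0 ≤ M *ᵥ x := by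
  simpa using mulVec_mono_of_nonneg hM hx

lemma mul_apply_nonneg {M N : Matrix m m ℝ} (hM : ∀ i j, 0 ≤ M i j) (hN : ∀ i j, 0 ≤ N i j)
    (i j : m) : 0 ≤ (M * N) i j :=
  Finset.sum_nonneg fun k _ => mul_nonneg (hM i k) (hN k j)

lemma norm_smul_le_mulVec_norm {M : Matrix m m ℝ} (hM : ∀ i j, 0 ≤ M i j) {z : ℂ}
    {v : m → ℂ} (hv : M.map (algebraMap ℝ ℂ) *ᵥ v = z • v) :
    ‖z‖ • (fun i => ‖v i‖) ≤ M *ᵥ fun i => ‖v i‖ := fun i => by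
  calc ‖z‖ * ‖v i‖ = ‖∑ j, (M i j : ℂ) * v j‖ := by
        rw [← norm_mul, ← smul_eq_mul, ← Pi.smul_apply, ← hv]; rfl
    _ ≤ ∑ j, M i j * ‖v j‖ := (norm_sum_le _ _).trans_eq <| Finset.sum_congr rfl fun j _ => by
        rw [norm_mul, Complex.norm_real, Real.norm_of_nonneg (hM i j)]

lemma exists_nonneg_diag_le (X : Matrix m m ℝ) : ∃ q, 0 ≤ q ∧ ∀ i, X i i ≤ q :=
  ⟨∑ i, |X i i|, Finset.sum_nonneg fun _ _ => abs_nonneg _, fun i => (le_abs_self _).trans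
    (Finset.single_le_sum (fun j _ => abs_nonneg (X j j)) (Finset.mem_univ i))⟩

variable [DecidableEq m]

lemma specRad_nonneg (M : Matrix m m ℝ) : 0 ≤ specRad M :=
  Real.sSup_nonneg (by rintro _ ⟨z, -, rfl⟩; exact norm_nonneg z)

lemma norm_le_specRad {M : Matrix m m ℝ} {z : ℂ} (hz : z ∈ spectrum ℂ (M.map (algebraMap ℝ ℂ))) :
    ‖z‖ ≤ specRad M :=
  le_csSup ((Matrix.finite_spectrum _).image _).bddAbove ⟨z, hz, rfl⟩

lemma exists_norm_eq_specRad [Nonempty m] (M : Matrix m m ℝ) :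
    ∃ z ∈ spectrum ℂ (M.map (algebraMap ℝ ℂ)), ‖z‖ = specRad M :=
  ((spectrum.nonempty_of_isAlgClosed_of_finiteDimensional ℂ _).image _).csSup_mem
    ((Matrix.finite_spectrum _).image _)

lemma exists_mulVec_eq_smul_of_mem_spectrum {N : Matrix m m ℂ} {z : ℂ}
    (hz : z ∈ spectrum ℂ N) : ∃ v ≠ 0, N *ᵥ v = z • v := by
  rw [spectrum.mem_iff, Matrix.isUnit_iff_isUnit_det, isUnit_iff_ne_zero, not_ne_iff,
    ← Matrix.exists_mulVec_eq_zero_iff] at hz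
  obtain ⟨v, hv0, hv⟩ := hz
  refine ⟨v, hv0, ?_⟩
  rwa [Algebra.algebraMap_eq_smul_one, sub_mulVec, smul_mulVec, one_mulVec, sub_eq_zero,
    eq_comm] at hv

lemma exists_specRad_smul_le_mulVec [Nonempty m] {M : Matrix m m ℝ} (hM : ∀ i j, 0 ≤ M i j) :
    ∃ w : m → ℝ, 0 ≤ w ∧ w ≠ 0 ∧ specRad M • w ≤ M *ᵥ w := by
  obtain ⟨z, hz, hzM⟩ := exists_norm_eq_specRad M
  obtain ⟨v, hv0, hv⟩ := exists_mulVec_eq_smul_of_mem_spectrum hz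
  refine ⟨fun i => ‖v i‖, fun i => norm_nonneg _, fun h => hv0 ?_, ?_⟩
  · funext i; simpa using congrFun h i
  · rw [← hzM]; exact norm_smul_le_mulVec_norm hM hv

lemma specRad_lt_of_mulVec_lt [Nonempty m] {M : Matrix m m ℝ} (hM : ∀ i j, 0 ≤ M i j)
    {u : m → ℝ} (hu : ∀ i, 0 < u i) {c : ℝ} (h : ∀ i, (M *ᵥ u) i < c * u i) :
    specRad M < c := by
  obtain ⟨w, hw, hw0, hMw⟩ := exists_specRad_smul_le_mulVec hM
  obtain ⟨i, -, hi⟩ := Finset.univ.exists_max_image (fun i => w i / u i) Finset.univ_nonempty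
  have hwu : w ≤ (w i / u i) • u := fun j => (div_le_iff₀ (hu j)).1 (hi j (Finset.mem_univ j))
  have hwi : 0 < w i := by
    obtain ⟨j, hj⟩ := Function.ne_iff.1 hw0
    have := (lt_of_le_of_ne (hw j) (Ne.symm hj)).trans_le (hwu j)
    exact (div_pos_iff_of_pos_right (hu i)).1 (pos_of_mul_pos_left this (hu j).le)
  have := calc specRad M * w i ≤ (M *ᵥ w) i := hMw i
    _ ≤ (M *ᵥ ((w i / u i) • u)) i := mulVec_mono_of_nonneg hM hwu i
    _ = (w i / u i) * (M *ᵥ u) i := by rw [mulVec_smul]; rfl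
    _ < (w i / u i) * (c * u i) := mul_lt_mul_of_pos_left (h i) (div_pos hwi (hu i))
    _ = c * w i := by field_simp [(hu i).ne']
  exact lt_of_mul_lt_mul_right this hwi.le

section Neumann

attribute [local instance] Matrix.linftyOpNormedAddCommGroup Matrix.linftyOpNormedRing
  Matrix.linftyOpNormedAlgebra

lemma spectralRadius_le_specRad (M : Matrix m m ℝ) :
    spectralRadius ℂ (M.map (algebraMap ℝ ℂ)) ≤ ENNReal.ofReal (specRad M) :=
  iSup₂_le fun z hz => by
    rw [← ENNReal.ofReal_coe_nnreal, coe_nnnorm]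
    exact ENNReal.ofReal_le_ofReal (norm_le_specRad hz)

lemma norm_map_algebraMap (M : Matrix m m ℝ) : ‖M.map (algebraMap ℝ ℂ)‖ = ‖M‖ := by
  simp [Matrix.linfty_opNorm_def]

lemma eventually_norm_pow_le_of_specRad_lt (M : Matrix m m ℝ) {c : ℝ} (hc : specRad M < c) :
    ∀ᶠ n in atTop, ‖M ^ n‖ ≤ c ^ n := by
  have hc0 : 0 < c := (specRad_nonneg M).trans_lt hc
  have hlt : spectralRadius ℂ (M.map (algebraMap ℝ ℂ)) < ENNReal.ofReal c :=
    (spectralRadius_le_specRad M).trans_lt ((ENNReal.ofReal_lt_ofReal_iff hc0).2 hc)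
  filter_upwards [(spectrum.pow_norm_pow_one_div_tendsto_nhds_spectralRadius _).eventually
    (gt_mem_nhds hlt), eventually_ge_atTop 1] with n hn hn1
  rw [ENNReal.ofReal_lt_ofReal_iff hc0, ← Matrix.map_pow, norm_map_algebraMap, one_div,
    Real.rpow_inv_lt_iff_of_pos (norm_nonneg _) hc0.le (by positivity)] at hn
  exact_mod_cast hn.le

lemma summable_pow_of_specRad_lt {P : Matrix m m ℝ} {q : ℝ} (hq : specRad P < q) :
    Summable fun n => (q⁻¹ • P) ^ n := by
  have hq0 : 0 < q := (specRad_nonneg P).trans_lt hq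
  obtain ⟨c, hPc, hcq⟩ := exists_between hq
  have hc0 : 0 ≤ c / q := div_nonneg ((specRad_nonneg P).trans hPc.le) hq0.le
  refine .of_norm_bounded_eventually_nat
    (summable_geometric_of_lt_one hc0 ((div_lt_one hq0).2 hcq)) ?_
  filter_upwards [eventually_norm_pow_le_of_specRad_lt P hPc] with n hn
  rw [smul_pow, norm_smul, div_pow, norm_pow, norm_inv, Real.norm_of_nonneg hq0.le, inv_pow,
    div_eq_inv_mul]
  exact mul_le_mul_of_nonneg_left hn (by positivity)

lemma IsNonsingMMatrix.exists_nonneg_right_inv {X : Matrix m m ℝ} (hX : IsNonsingMMatrix X) :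
    ∃ R : Matrix m m ℝ, (∀ i j, 0 ≤ R i j) ∧ X * R = 1 := by
  obtain ⟨q, P, hP, rfl, hq⟩ := hX
  have hq0 : 0 < q := (specRad_nonneg P).trans_lt hq
  have hsum := summable_pow_of_specRad_lt hq
  refine ⟨q⁻¹ • ∑' n, (q⁻¹ • P) ^ n, fun i j => ?_, ?_⟩
  · have h1 : 0 ≤ (∑' n, (q⁻¹ • P) ^ n) i j :=
      (Pi.hasSum.1 (Pi.hasSum.1 hsum.hasSum i) j).nonneg fun n =>
        Matrix.pow_apply_nonneg (fun i j => mul_nonneg (inv_nonneg.2 hq0.le) (hP i j)) n i j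
    exact mul_nonneg (inv_nonneg.2 hq0.le) h1
  · rw [mul_smul_comm, ← smul_mul_assoc, smul_sub, smul_smul, inv_mul_cancel₀ hq0.ne', one_smul]
    exact hsum.one_sub_mul_tsum_pow

end Neumann

namespace IsNonsingMMatrix

variable {X : Matrix m m ℝ}

lemma isUnit_det (hX : IsNonsingMMatrix X) : IsUnit X.det := by
  obtain ⟨R, -, hR⟩ := hX.exists_nonneg_right_inv
  exact Matrix.isUnit_det_of_right_inverse hR

lemma inv_nonneg (hX : IsNonsingMMatrix X) : ∀ i j, 0 ≤ X⁻¹ i j := by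
  obtain ⟨R, hR0, hR⟩ := hX.exists_nonneg_right_inv
  rwa [Matrix.inv_eq_right_inv hR]

lemma nonpos_of_mulVec_nonpos (hX : IsNonsingMMatrix X) {y : m → ℝ} (hy : X *ᵥ y ≤ 0) :
    y ≤ 0 := by
  have := mulVec_mono_of_nonneg hX.inv_nonneg hy
  rwa [mulVec_mulVec, Matrix.nonsing_inv_mul _ hX.isUnit_det, one_mulVec, mulVec_zero] at this

lemma exists_smul_le_inv_mulVec (hX : IsNonsingMMatrix X) :
    ∃ c : ℝ, 0 < c ∧ ∀ w : m → ℝ, 0 ≤ w → c • w ≤ X⁻¹ *ᵥ w := by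
  have hR0 := hX.inv_nonneg
  have hXR := Matrix.mul_nonsing_inv _ hX.isUnit_det
  set R := X⁻¹
  obtain ⟨q, P, hP, rfl, hq⟩ := hX
  have hq0 : 0 < q := (specRad_nonneg P).trans_lt hq
  refine ⟨q⁻¹, inv_pos.2 hq0, fun w hw i => ?_⟩
  have hid : q • (R *ᵥ w) = w + P *ᵥ (R *ᵥ w) := by
    rw [sub_mul, sub_eq_iff_eq_add, smul_mul_assoc, one_mul] at hXR
    rw [← smul_mulVec, hXR, add_mulVec, one_mulVec, mulVec_mulVec]
  have hPRw := mulVec_nonneg_of_nonneg hP (mulVec_nonneg_of_nonneg hR0 hw) i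
  have hi := congrFun hid i
  simp only [Pi.smul_apply, Pi.add_apply, Pi.zero_apply, smul_eq_mul] at hi hPRw ⊢
  rw [inv_mul_le_iff₀ hq0]
  linarith

end IsNonsingMMatrix

lemma le_specRad_of_smul_le_mulVec {M : Matrix m m ℝ} (hM : ∀ i j, 0 ≤ M i j) {w : m → ℝ}
    (hw : 0 ≤ w) (hw0 : w ≠ 0) {α : ℝ} (h : α • w ≤ M *ᵥ w) : α ≤ specRad M := by
  by_contra! hlt
  have hX : IsNonsingMMatrix (α • 1 - M) := ⟨α, M, hM, rfl, hlt⟩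
  refine hw0 (le_antisymm (hX.nonpos_of_mulVec_nonpos ?_) hw)
  rw [sub_mulVec, smul_mulVec, one_mulVec]
  exact sub_nonpos.2 h

lemma le_mul_specRad_of_smul_le_smul_mulVec {M : Matrix m m ℝ} (hM : ∀ i j, 0 ≤ M i j)
    {w : m → ℝ} (hw : 0 ≤ w) (hw0 : w ≠ 0) {α s : ℝ} (hs : 0 ≤ s)
    (h : α • w ≤ s • (M *ᵥ w)) : α ≤ s * specRad M := by
  rcases hs.eq_or_lt with rfl | hs
  · obtain ⟨i, hi⟩ := Function.ne_iff.1 hw0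
    have := h i
    simp only [Pi.smul_apply, smul_eq_mul, zero_mul] at this
    rw [zero_mul]
    exact nonpos_of_mul_nonpos_left this ((hw i).lt_of_ne' hi)
  · rw [← div_le_iff₀' hs]
    refine le_specRad_of_smul_le_mulVec hM hw hw0 fun i => ?_
    have := h i
    simp only [Pi.smul_apply, smul_eq_mul] at this ⊢
    rw [div_mul_eq_mul_div, div_le_iff₀' hs]
    exact this

lemma IsMMatrix.isNonsingMMatrix_add_smul_one {X : Matrix m m ℝ} (hX : IsMMatrix X) {ε : ℝ}
    (hε : 0 < ε) : IsNonsingMMatrix (X + ε • 1) := by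
  obtain ⟨q, P, hP, rfl, hq⟩ := hX
  exact ⟨q + ε, P, hP, by rw [add_smul]; abel, by linarith⟩

lemma map_smul_one_sub (X : Matrix m m ℝ) (q : ℝ) :
    (q • 1 - X).map (algebraMap ℝ ℂ) = algebraMap ℂ (Matrix m m ℂ) q - X.map (algebraMap ℝ ℂ) := by
  ext i j
  rw [Algebra.algebraMap_eq_smul_one]
  by_cases h : i = j <;> simp [h, one_apply]

lemma Complex.norm_ofReal_sub_sq (q : ℝ) (ν : ℂ) :
    ‖(q : ℂ) - ν‖ ^ 2 = q ^ 2 - 2 * q * ν.re + ‖ν‖ ^ 2 := by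
  rw [Complex.sq_norm, Complex.sq_norm, Complex.normSq_apply, Complex.normSq_apply]
  simp only [Complex.sub_re, Complex.ofReal_re, Complex.sub_im, Complex.ofReal_im]
  ring

lemma Complex.lt_norm_ofReal_sub {q : ℝ} (hq : 0 ≤ q) {ν : ℂ} (hν : ν ≠ 0) (hre : ν.re ≤ 0) :
    q < ‖(q : ℂ) - ν‖ := by
  have := norm_pos_iff.2 hν
  refine lt_of_pow_lt_pow_left₀ 2 (norm_nonneg _) ?_
  rw [Complex.norm_ofReal_sub_sq]
  nlinarith

lemma Complex.norm_ofReal_sub_le {q : ℝ} (hq : 0 ≤ q) {ν : ℂ} (h : ‖ν‖ ^ 2 ≤ 2 * q * ν.re) :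
    ‖(q : ℂ) - ν‖ ≤ q := by
  rw [← pow_le_pow_iff_left₀ (norm_nonneg _) hq two_ne_zero, Complex.norm_ofReal_sub_sq]
  linarith

namespace IsZMatrix

variable {X : Matrix m m ℝ}

lemma isNonsingMMatrix [Nonempty m] (hX : IsZMatrix X) {u : m → ℝ} (hu : ∀ i, 0 < u i)
    (hXu : ∀ i, 0 < (X *ᵥ u) i) : IsNonsingMMatrix X := by
  obtain ⟨q, -, hq⟩ := exists_nonneg_diag_le X
  refine ⟨q, q • 1 - X, hX.nonneg_smul_one_sub hq, (sub_sub_cancel _ _).symm,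
    specRad_lt_of_mulVec_lt (hX.nonneg_smul_one_sub hq) hu fun i => ?_⟩
  simp only [sub_mulVec, smul_mulVec, one_mulVec, Pi.sub_apply, Pi.smul_apply, smul_eq_mul]
  linarith [hXu i]

lemma isNonsingMMatrix_smul_add_smul_one [Nonempty m] (hX : IsZMatrix X) {u : m → ℝ}
    (hu : ∀ i, 0 < u i) (hXu : ∀ i, 0 < (X *ᵥ u) i) {t ε : ℝ} (ht : 0 ≤ t) (hε : 0 < ε) :
    IsNonsingMMatrix (t • X + ε • 1) := by
  refine IsZMatrix.isNonsingMMatrix (fun i j hij => ?_) hu fun i => ?_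
  · simp only [Matrix.add_apply, Matrix.smul_apply, one_apply_ne hij, smul_eq_mul]
    nlinarith [hX i j hij]
  · simp only [add_mulVec, smul_mulVec, one_mulVec, Pi.add_apply, Pi.smul_apply, smul_eq_mul]
    nlinarith [hXu i, hu i]

lemma mulVec_norm_le (hX : IsZMatrix X) {q : ℝ} (hq : ∀ i, X i i ≤ q) {ν : ℂ} {v : m → ℂ}
    (hv : X.map (algebraMap ℝ ℂ) *ᵥ v = ν • v) :
    X *ᵥ (fun i => ‖v i‖) ≤ (q - ‖(q : ℂ) - ν‖) • fun i => ‖v i‖ := by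
  have hQv : (q • 1 - X).map (algebraMap ℝ ℂ) *ᵥ v = ((q : ℂ) - ν) • v := by
    rw [map_smul_one_sub, sub_mulVec, hv, Algebra.algebraMap_eq_smul_one, smul_mulVec,
      one_mulVec, sub_smul]
  intro i
  have := norm_smul_le_mulVec_norm (hX.nonneg_smul_one_sub hq) hQv i
  simp only [sub_mulVec, smul_mulVec, one_mulVec, Pi.sub_apply, Pi.smul_apply,
    smul_eq_mul] at this ⊢
  linarith

lemma isMMatrix_of_re_pos (hX : IsZMatrix X)
    (h : ∀ ν ∈ spectrum ℂ (X.map (algebraMap ℝ ℂ)), ν ≠ 0 → 0 < ν.re) : IsMMatrix X := by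
  obtain ⟨q₁, hq₁0, hq₁⟩ := exists_nonneg_diag_le X
  obtain ⟨q₂, hq₂⟩ := ((Matrix.finite_spectrum (X.map (algebraMap ℝ ℂ))).image
    fun ν : ℂ => ‖ν‖ ^ 2 / (2 * ν.re)).bddAbove
  have hq0 : 0 ≤ max q₁ q₂ := hq₁0.trans (le_max_left _ _)
  refine ⟨max q₁ q₂, max q₁ q₂ • 1 - X,
    hX.nonneg_smul_one_sub fun i => (hq₁ i).trans (le_max_left _ _), (sub_sub_cancel _ _).symm,
    Real.sSup_le ?_ hq0⟩
  rintro _ ⟨z, hz, rfl⟩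
  rw [map_smul_one_sub, ← spectrum.singleton_sub_eq] at hz
  obtain ⟨_, rfl, ν, hν, rfl⟩ := hz
  rcases eq_or_ne ν 0 with rfl | hν0
  · simp [abs_of_nonneg hq0]
  · have hre := h ν hν hν0
    have := (hq₂ ⟨ν, hν, rfl⟩).trans (le_max_right q₁ q₂)
    rw [div_le_iff₀ (by positivity)] at this
    exact Complex.norm_ofReal_sub_le hq0 (by linarith)

end IsZMatrix

end

section Pencil

variable {m : Type*} [Fintype m] [DecidableEq m] {A C : Matrix m m ℝ}

lemma inv_mulVec_sub_le_smul_inv_mulVec (hC : IsNonsingMMatrix C) {t ε : ℝ} (ht : 0 < t)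
    (hε : 0 ≤ ε) (hCε : IsNonsingMMatrix (t • C + ε • 1)) {b : m → ℝ} (hb : 0 ≤ b) :
    C⁻¹ *ᵥ b - (ε / t) • (C⁻¹ *ᵥ (C⁻¹ *ᵥ b)) ≤ t • ((t • C + ε • 1)⁻¹ *ᵥ b) := by
  set y := (t • C + ε • 1)⁻¹ *ᵥ b
  have hKy := mulVec_nonneg_of_nonneg hC.inv_nonneg (mulVec_nonneg_of_nonneg hCε.inv_nonneg hb)
  have hid : t • y + ε • (C⁻¹ *ᵥ y) = C⁻¹ *ᵥ b := by
    have hy : (t • C + ε • 1) *ᵥ y = b := by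
      rw [mulVec_mulVec, mul_nonsing_inv _ hCε.isUnit_det, one_mulVec]
    rw [← hy, add_mulVec, mulVec_add, smul_mulVec, smul_mulVec, mulVec_smul, mulVec_smul,
      one_mulVec, mulVec_mulVec y C⁻¹ C, nonsing_inv_mul _ hC.isUnit_det, one_mulVec]
  have hy : y ≤ t⁻¹ • (C⁻¹ *ᵥ b) := fun i => by
    have h1 := congrFun hid i
    have h2 := hKy i
    simp only [Pi.add_apply, Pi.smul_apply, Pi.zero_apply, smul_eq_mul] at h1 h2 ⊢
    rw [← div_eq_inv_mul, le_div_iff₀ ht]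
    nlinarith
  have hKy' := mulVec_mono_of_nonneg hC.inv_nonneg hy
  rw [mulVec_smul] at hKy'
  intro i
  have h1 := congrFun hid i
  have h2 := hKy' i
  simp only [Pi.add_apply, Pi.sub_apply, Pi.smul_apply, smul_eq_mul] at h1 h2 ⊢
  rw [div_eq_mul_inv]
  nlinarith

variable [Nonempty m] {u : m → ℝ}

lemma re_pos_of_mem_spectrum_smul_sub (hA : ∀ i j, 0 ≤ A i j) (hC : IsZMatrix C)
    (hu : ∀ i, 0 < u i) (hCu : ∀ i, 0 < (C *ᵥ u) i) {t : ℝ} (ht0 : 0 ≤ t) (ht1 : t ≤ 1)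
    (hμ : (1 - t) * specRad (C⁻¹ * A) ≤ t) {ν : ℂ}
    (hν : ν ∈ spectrum ℂ ((t • C - (1 - t) • A).map (algebraMap ℝ ℂ))) (hν0 : ν ≠ 0) :
    0 < ν.re := by
  by_contra! hre
  have hK := hC.isNonsingMMatrix hu hCu
  obtain ⟨c, hc0, hc⟩ := hK.exists_smul_le_inv_mulVec
  obtain ⟨v, hv0, hv⟩ := exists_mulVec_eq_smul_of_mem_spectrum hν
  set w : m → ℝ := fun i => ‖v i‖
  have hw : 0 ≤ w := fun i => norm_nonneg _
  have hw0 : w ≠ 0 := fun h => hv0 (funext fun i => by simpa [w] using congrFun h i)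
  obtain ⟨q, hq0, hq⟩ := exists_nonneg_diag_le (t • C - (1 - t) • A)
  set δ := ‖(q : ℂ) - ν‖ - q
  have hδ : 0 < δ := sub_pos.2 (Complex.lt_norm_ofReal_sub hq0 hν0 hre)
  have hXw := (hC.smul_sub_smul hA ht0 ht1).mulVec_norm_le hq hv
  have hCw : t • (C *ᵥ w) + δ • w ≤ (1 - t) • (A *ᵥ w) := fun i => by
    have := hXw i
    simp only [sub_mulVec, smul_mulVec, Pi.sub_apply, Pi.smul_apply, Pi.add_apply,
      smul_eq_mul] at this ⊢
    linarith
  have hMw := mulVec_mono_of_nonneg hK.inv_nonneg hCw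
  rw [mulVec_add, mulVec_smul, mulVec_smul, mulVec_smul, mulVec_mulVec,
    nonsing_inv_mul _ hK.isUnit_det, one_mulVec, mulVec_mulVec] at hMw
  have key : (t + δ * c) • w ≤ (1 - t) • ((C⁻¹ * A) *ᵥ w) := fun i => by
    have h1 := hc w hw i
    have h2 := hMw i
    simp only [Pi.add_apply, Pi.smul_apply, smul_eq_mul] at h1 h2 ⊢
    nlinarith
  have := le_mul_specRad_of_smul_le_smul_mulVec (mul_apply_nonneg hK.inv_nonneg hA) hw hw0
    (by linarith) key
  nlinarith [mul_pos hδ hc0]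

lemma isMMatrix_smul_sub (hA : ∀ i j, 0 ≤ A i j) (hC : IsZMatrix C) (hu : ∀ i, 0 < u i)
    (hCu : ∀ i, 0 < (C *ᵥ u) i) {t : ℝ} (ht0 : 0 ≤ t) (ht1 : t ≤ 1)
    (hμ : (1 - t) * specRad (C⁻¹ * A) ≤ t) : IsMMatrix (t • C - (1 - t) • A) :=
  (hC.smul_sub_smul hA ht0 ht1).isMMatrix_of_re_pos fun _ hν hν0 =>
    re_pos_of_mem_spectrum_smul_sub hA hC hu hCu ht0 ht1 hμ hν hν0

lemma not_isMMatrix_smul_sub (hA : ∀ i j, 0 ≤ A i j) (hC : IsZMatrix C) (hu : ∀ i, 0 < u i)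
    (hCu : ∀ i, 0 < (C *ᵥ u) i) {t : ℝ} (ht0 : 0 < t) (hμ : t < (1 - t) * specRad (C⁻¹ * A)) :
    ¬ IsMMatrix (t • C - (1 - t) • A) := by
  intro hX
  have hK := hC.isNonsingMMatrix hu hCu
  set μ := specRad (C⁻¹ * A)
  have ht1 : t < 1 := by nlinarith [specRad_nonneg (C⁻¹ * A)]
  obtain ⟨w, hw, hw0, hMw⟩ := exists_specRad_smul_le_mulVec (mul_apply_nonneg hK.inv_nonneg hA)
  obtain ⟨c, hc0, hc⟩ := exists_le_mul_of_pos (C⁻¹ *ᵥ ((C⁻¹ * A) *ᵥ w)) w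
  obtain ⟨ε, hε, hεc⟩ : ∃ ε > 0, ε / t * ((1 - t) * c) ≤ (1 - t) * μ - t := by
    have hD : 0 < (1 - t) * c + 1 := by nlinarith
    refine ⟨t * (((1 - t) * μ - t) / ((1 - t) * c + 1)),
      mul_pos ht0 (div_pos (by linarith) hD), ?_⟩
    rw [mul_div_cancel_left₀ _ ht0.ne', div_mul_eq_mul_div, div_le_iff₀ hD]
    nlinarith
  have hCε := hC.isNonsingMMatrix_smul_add_smul_one hu hCu ht0.le hε
  have hAw : 0 ≤ (1 - t) • (A *ᵥ w) :=
    smul_nonneg (by linarith) (mulVec_nonneg_of_nonneg hA hw)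
  set y := (t • C + ε • 1)⁻¹ *ᵥ ((1 - t) • (A *ᵥ w))
  have hwy : w ≤ y := fun i => by
    rcases (hw i).eq_or_lt with h | h
    · exact h ▸ mulVec_nonneg_of_nonneg hCε.inv_nonneg hAw i
    have h1 := inv_mulVec_sub_le_smul_inv_mulVec hK ht0 hε.le hCε hAw i
    rw [mulVec_smul, mulVec_smul, mulVec_mulVec] at h1
    have h2 := hMw i
    simp only [Pi.sub_apply, Pi.smul_apply, smul_eq_mul] at h1 h2
    have e1 := mul_le_mul_of_nonneg_left h2 (sub_nonneg.2 ht1.le)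
    have e2 := mul_le_mul_of_nonneg_left (hc i h) (by positivity : 0 ≤ ε / t * (1 - t))
    have e3 := mul_le_mul_of_nonneg_right hεc (hw i)
    refine le_of_mul_le_mul_left ?_ ht0
    nlinarith
  have hXy : (t • C - (1 - t) • A + ε • 1) *ᵥ y ≤ 0 := by
    have hy : (t • C + ε • 1) *ᵥ y = (1 - t) • (A *ᵥ w) := by
      rw [mulVec_mulVec, mul_nonsing_inv _ hCε.isUnit_det, one_mulVec]
    rw [sub_add_eq_add_sub, sub_mulVec, hy, smul_mulVec, ← smul_sub]
    exact smul_nonpos_of_nonneg_of_nonpos (by linarith)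
      (sub_nonpos.2 (mulVec_mono_of_nonneg hA hwy))
  exact hw0 (le_antisymm
    (hwy.trans ((hX.isNonsingMMatrix_add_smul_one hε).nonpos_of_mulVec_nonpos hXy)) hw)

end Pencil

lemma IsZMatrix.mulVec_le_subm_mulVec {n : ℕ} {Z : Matrix (Fin n) (Fin n) ℝ} (hZ : IsZMatrix Z)
    {u : Fin n → ℝ} (hu : 0 ≤ u) (J : Finset (Fin n)) (i : J) :
    (Z *ᵥ u) i ≤ (subm Z J *ᵥ fun j => u j) i := by
  have hsplit := Finset.sum_sdiff (Finset.subset_univ J) (f := fun j => Z i j * u j)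
  have hout : ∑ j ∈ Finset.univ \ J, Z i j * u j ≤ 0 := Finset.sum_nonpos fun j hj =>
    mul_nonpos_of_nonpos_of_nonneg (hZ _ _ fun h => (Finset.mem_sdiff.1 hj).2 (h ▸ i.2)) (hu j)
  have hin : (subm Z J *ᵥ fun j => u j) i = ∑ j ∈ J, Z i j * u j :=
    Finset.sum_coe_sort J fun j => Z i j * u j
  rw [hin]
  change ∑ j, Z i j * u j ≤ _
  linarith

theorem stmt_15_general {n : ℕ} (A B : Matrix (Fin n) (Fin n) ℝ)
    (hc1 : ∀ i j, 0 ≤ A i j)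
    (hc2 : ∀ i j, i ≠ j → B i j ≤ A i j)
    (hc3 : ∃ u : Fin n → ℝ, (∀ i, 0 < u i) ∧ ∀ i, 0 < (B - A).mulVec u i) :
    ∀ J : Finset (Fin n), J.Nonempty →
      (∀ t : ℝ, tauJ A B J ≤ t → t ≤ 1 →
        IsMMatrix (t • subm B J - subm A J)) ∧
      (∀ t : ℝ, 0 < t → t < tauJ A B J →
        ¬ IsMMatrix (t • subm B J - subm A J)) := by
  intro J hJ
  obtain ⟨u, hu, hBAu⟩ := hc3
  have : Nonempty J := hJ.to_subtype
  have hA : ∀ i j, 0 ≤ subm A J i j := fun i j => hc1 _ _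
  have hZ : IsZMatrix (B - A) := fun i j hij => sub_nonpos.2 (hc2 i j hij)
  have hC : IsZMatrix (subm B J - subm A J) := fun i j hij => hZ _ _ (Subtype.val_injective.ne hij)
  have hCu : ∀ i, 0 < ((subm B J - subm A J) *ᵥ fun j : J => u j) i := fun i =>
    (hBAu i).trans_le (hZ.mulVec_le_subm_mulVec (fun i => (hu i).le) J i)
  have hpencil (t : ℝ) :
      t • subm B J - subm A J = t • (subm B J - subm A J) - (1 - t) • subm A J := by
    module
  have hμ := specRad_nonneg ((subm B J - subm A J)⁻¹ * subm A J)
  refine ⟨fun t hτt ht1 => ?_, fun t ht0 htτ => ?_⟩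
  · have ht0 : 0 ≤ t := (div_nonneg hμ (by linarith)).trans hτt
    rw [tauJ, div_le_iff₀ (by linarith)] at hτt
    rw [hpencil]
    exact isMMatrix_smul_sub hA hC (fun i => hu i) hCu ht0 ht1 (by linarith)
  · rw [tauJ, lt_div_iff₀ (by linarith)] at htτ
    rw [hpencil]
    exact not_isMMatrix_smul_sub hA hC (fun i => hu i) hCu ht0 (by linarith)

/-- Under (c1)–(c3), for every nonempty `J`: `tB_J − A_J` is an M-matrix for
all `τ_J ≤ t ≤ 1`, and is not an M-matrix for all `0 < t < τ_J`. -/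
theorem stmt_15 {n : ℕ} (A B : Matrix (Fin n) (Fin n) ℝ)
    (hBA : IsUnit (B - A).det)
    (hc1 : ∀ i j, 0 ≤ A i j)
    (hc2 : ∀ i j, i ≠ j → B i j ≤ A i j)
    (hc3 : ∃ u : Fin n → ℝ, (∀ i, 0 < u i) ∧ ∀ i, 0 < (B - A).mulVec u i) :
    ∀ J : Finset (Fin n), J.Nonempty →
      (∀ t : ℝ, tauJ A B J ≤ t → t ≤ 1 →
        IsMMatrix (t • subm B J - subm A J)) ∧
      (∀ t : ℝ, 0 < t → t < tauJ A B J →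
        ¬ IsMMatrix (t • subm B J - subm A J)) :=
  stmt_15_general A B hc1 hc2 hc3
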